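/- Let β > 0 and let W : ℝ^d × P₂(ℝ^d) → ℝ^d be continuous (where P₂(ℝ^d) is equipped with the 2-Wasserstein distance) such that for all μ, ν ∈ P₂(ℝ^d) and every coupling γ of μ and ν, ∫ (W(x,μ) − W(y,ν)) · (x − y) γ(dx,dy) ≥ β ∫ ‖W(x,μ) − W(y,ν)‖² γ(dx,dy). Then W is (1/β)-Lipschitz in the space variable uniformly in the measure: for every μ ∈ P₂(ℝ^d) and all x, y ∈ ℝ^d, ‖W(x,μ) − W(y,μ)‖ ≤ (1/β) ‖x − y‖. -/

import Mathlib

/-!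
Perturb `μ` into `μ_x = (1 - ε) μ + ε δ_x` and `μ_y = (1 - ε) μ + ε δ_y`, and couple them by the
diagonal on the common part and by `δ_(x,y)` on the atoms. The diagonal contributes nothing to the
right-hand side of the monotonicity inequality and something nonnegative to the left-hand side,
so dividing by `ε` leaves `β ‖Δ‖² ≤ ⟪Δ, x - y⟫` for `Δ = W(x, μ_x) - W(y, μ_y)`, i.e.
`‖Δ‖ ≤ ‖x - y‖ / β`. Since `W₂(μ, μ_x)² ≤ ε ∫ ‖z - x‖² dμ`, continuity of `W` lets `ε → 0`.
-/

open MeasureTheory Set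
open scoped ENNReal RealInnerProductSpace NNReal

noncomputable section

/-- A coupling of two measures on `ℝ^d`. -/
def IsCoupling {d : ℕ} (γ : Measure (EuclideanSpace ℝ (Fin d) × EuclideanSpace ℝ (Fin d)))
    (μ ν : Measure (EuclideanSpace ℝ (Fin d))) : Prop :=
  γ.map Prod.fst = μ ∧ γ.map Prod.snd = ν

/-- `μ ∈ P₂(ℝ^d)`: a Borel probability measure with finite second moment. -/
def MemP2 {d : ℕ} (μ : Measure (EuclideanSpace ℝ (Fin d))) : Prop :=
  IsProbabilityMeasure μ ∧ Integrable (fun x => ‖x‖ ^ 2) μ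

/-- The 2-Wasserstein distance, as the infimum over couplings. -/
def W2 {d : ℕ} (μ ν : Measure (EuclideanSpace ℝ (Fin d))) : ℝ≥0∞ :=
  ⨅ γ ∈ {γ : Measure (EuclideanSpace ℝ (Fin d) × EuclideanSpace ℝ (Fin d)) |
      IsCoupling γ μ ν},
    (∫⁻ p, (‖p.1 - p.2‖₊ : ℝ≥0∞) ^ 2 ∂γ) ^ ((1 : ℝ) / 2)

open Filter Topology

def W2Continuous {d : ℕ}
    (W : EuclideanSpace ℝ (Fin d) → Measure (EuclideanSpace ℝ (Fin d)) →
      EuclideanSpace ℝ (Fin d)) : Prop :=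
  ∀ μ, MemP2 μ → ∀ x : EuclideanSpace ℝ (Fin d), ∀ ε > (0 : ℝ), ∃ δ > (0 : ℝ),
    ∀ ν, MemP2 ν → ∀ x' : EuclideanSpace ℝ (Fin d),
      W2 μ ν < ENNReal.ofReal δ → dist x x' < δ → ‖W x' ν - W x μ‖ < ε

def StronglyL2Monotone {d : ℕ} (β : ℝ)
    (W : EuclideanSpace ℝ (Fin d) → Measure (EuclideanSpace ℝ (Fin d)) →
      EuclideanSpace ℝ (Fin d)) : Prop :=
  ∀ μ ν, MemP2 μ → MemP2 ν →
    ∀ γ : Measure (EuclideanSpace ℝ (Fin d) × EuclideanSpace ℝ (Fin d)),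
      IsCoupling γ μ ν →
      β * ∫ p, ‖W p.1 μ - W p.2 ν‖ ^ 2 ∂γ ≤ ∫ p, ⟪W p.1 μ - W p.2 ν, p.1 - p.2⟫ ∂γ

lemma norm_le_of_mul_sq_le_inner {F : Type*} [NormedAddCommGroup F] [InnerProductSpace ℝ F]
    {β : ℝ} (hβ : 0 < β) {u v : F} (h : β * ‖u‖ ^ 2 ≤ ⟪u, v⟫) : ‖u‖ ≤ 1 / β * ‖v‖ := by
  rw [div_mul_eq_mul_div, one_mul, le_div_iff₀ hβ]
  nlinarith [real_inner_le_norm u v, norm_nonneg u, norm_nonneg v]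

section DiracMix

variable {α : Type*} [MeasurableSpace α]

def MeasureTheory.Measure.diracMix (μ : Measure α) (ε : ℝ) (x : α) : Measure α :=
  ENNReal.ofReal (1 - ε) • μ + ENNReal.ofReal ε • Measure.dirac x

lemma isProbabilityMeasure_diracMix (μ : Measure α) [IsProbabilityMeasure μ] {ε : ℝ}
    (h0 : 0 ≤ ε) (h1 : ε ≤ 1) (x : α) : IsProbabilityMeasure (μ.diracMix ε x) := by
  constructor
  rw [Measure.diracMix, Measure.add_apply, Measure.smul_apply, Measure.smul_apply, measure_univ,
    measure_univ, smul_eq_mul, smul_eq_mul, mul_one, mul_one,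
    ← ENNReal.ofReal_add (sub_nonneg.2 h1) h0, sub_add_cancel, ENNReal.ofReal_one]

variable {E : Type*} [NormedAddCommGroup E] {f : α → E} {μ : Measure α} {ε : ℝ}

lemma MeasureTheory.Integrable.of_diracMix {x : α} (hf : Integrable f (μ.diracMix ε x))
    (h1 : ε < 1) : Integrable f μ :=
  (integrable_smul_measure (ENNReal.ofReal_pos.2 (sub_pos.2 h1)).ne'
    ENNReal.ofReal_ne_top).1 hf.left_of_add_measure

lemma MeasureTheory.Integrable.diracMix [MeasurableSingletonClass α] (hf : Integrable f μ)
    (ε : ℝ) (x : α) : Integrable f (μ.diracMix ε x) :=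
  (hf.smul_measure ENNReal.ofReal_ne_top).add_measure
    ((integrable_dirac enorm_lt_top).smul_measure ENNReal.ofReal_ne_top)

lemma integral_diracMix [MeasurableSingletonClass α] [NormedSpace ℝ E] [CompleteSpace E]
    (hf : Integrable f μ) (h0 : 0 ≤ ε) (h1 : ε ≤ 1) (x : α) :
    ∫ z, f z ∂μ.diracMix ε x = (1 - ε) • ∫ z, f z ∂μ + ε • f x := by
  rw [Measure.diracMix, integral_add_measure (hf.smul_measure ENNReal.ofReal_ne_top)
    ((integrable_dirac enorm_lt_top).smul_measure ENNReal.ofReal_ne_top),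
    integral_smul_measure, integral_smul_measure, integral_dirac,
    ENNReal.toReal_ofReal (sub_nonneg.2 h1), ENNReal.toReal_ofReal h0]

lemma integral_diracMix_map_diag [NormedSpace ℝ E] [CompleteSpace E]
    [MeasurableSingletonClass (α × α)] {g : α × α → E} (hg : StronglyMeasurable g)
    (hgi : Integrable (fun z => g (z, z)) μ) (h0 : 0 ≤ ε) (h1 : ε ≤ 1) (x y : α) :
    ∫ p, g p ∂(μ.map fun z => (z, z)).diracMix ε (x, y) =
      (1 - ε) • ∫ z, g (z, z) ∂μ + ε • g (x, y) := by
  have hdiag : Measurable fun z : α => (z, z) := measurable_id.prodMk measurable_id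
  rw [integral_diracMix ((integrable_map_measure hg.aestronglyMeasurable
    hdiag.aemeasurable).2 hgi) h0 h1, integral_map hdiag.aemeasurable hg.aestronglyMeasurable]

end DiracMix

section Coupling

variable {d : ℕ} {μ ν : Measure (EuclideanSpace ℝ (Fin d))}

lemma IsCoupling.smul_add_smul
    {γ₁ γ₂ : Measure (EuclideanSpace ℝ (Fin d) × EuclideanSpace ℝ (Fin d))}
    {μ₁ μ₂ ν₁ ν₂ : Measure (EuclideanSpace ℝ (Fin d))}
    (h₁ : IsCoupling γ₁ μ₁ ν₁) (h₂ : IsCoupling γ₂ μ₂ ν₂) (a b : ℝ≥0∞) :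
    IsCoupling (a • γ₁ + b • γ₂) (a • μ₁ + b • μ₂) (a • ν₁ + b • ν₂) := by
  constructor <;>
    simp only [Measure.map_add _ _ measurable_fst, Measure.map_add _ _ measurable_snd,
      Measure.map_smul, h₁.1, h₁.2, h₂.1, h₂.2]

lemma isCoupling_map_diag (μ : Measure (EuclideanSpace ℝ (Fin d))) :
    IsCoupling (μ.map fun z => (z, z)) μ μ := by
  constructor <;>
    rw [Measure.map_map (by fun_prop) (by fun_prop)] <;> exact Measure.map_id

lemma isCoupling_dirac (x y : EuclideanSpace ℝ (Fin d)) :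
    IsCoupling (Measure.dirac (x, y)) (Measure.dirac x) (Measure.dirac y) :=
  ⟨Measure.map_dirac' measurable_fst _, Measure.map_dirac' measurable_snd _⟩

lemma isCoupling_map_prodMk_const (μ : Measure (EuclideanSpace ℝ (Fin d)))
    [IsProbabilityMeasure μ] (c : EuclideanSpace ℝ (Fin d)) :
    IsCoupling (μ.map fun z => (z, c)) μ (Measure.dirac c) := by
  constructor
  · rw [Measure.map_map (by fun_prop) (by fun_prop)]; exact Measure.map_id
  · rw [Measure.map_map (by fun_prop) (by fun_prop)]
    simp [Function.comp_def, Measure.map_const]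

lemma IsCoupling.diracMix
    {γ : Measure (EuclideanSpace ℝ (Fin d) × EuclideanSpace ℝ (Fin d))}
    (h : IsCoupling γ μ ν) (ε : ℝ) (x y : EuclideanSpace ℝ (Fin d)) :
    IsCoupling (γ.diracMix ε (x, y)) (μ.diracMix ε x) (ν.diracMix ε y) :=
  h.smul_add_smul (isCoupling_dirac x y) _ _

lemma MemP2.diracMix (hμ : MemP2 μ) {ε : ℝ} (h0 : 0 ≤ ε) (h1 : ε ≤ 1)
    (x : EuclideanSpace ℝ (Fin d)) : MemP2 (μ.diracMix ε x) :=
  haveI := hμ.1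
  ⟨isProbabilityMeasure_diracMix μ h0 h1 x, hμ.2.diracMix ε x⟩

end Coupling

section Wasserstein

variable {d : ℕ} {μ ν : Measure (EuclideanSpace ℝ (Fin d))}

lemma W2_le_of_isCoupling
    {γ : Measure (EuclideanSpace ℝ (Fin d) × EuclideanSpace ℝ (Fin d))}
    (h : IsCoupling γ μ ν) :
    W2 μ ν ≤ (∫⁻ p, ‖p.1 - p.2‖ₑ ^ 2 ∂γ) ^ ((1 : ℝ) / 2) :=
  iInf₂_le γ h

lemma W2_self (μ : Measure (EuclideanSpace ℝ (Fin d))) : W2 μ μ = 0 := by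
  refine nonpos_iff_eq_zero.1 ((W2_le_of_isCoupling (isCoupling_map_diag μ)).trans_eq ?_)
  rw [lintegral_map (by fun_prop) (by fun_prop)]
  simp

lemma W2_diracMix_le (μ : Measure (EuclideanSpace ℝ (Fin d))) [IsProbabilityMeasure μ]
    {ε : ℝ} (h0 : 0 ≤ ε) (h1 : ε ≤ 1) (c : EuclideanSpace ℝ (Fin d)) :
    W2 μ (μ.diracMix ε c) ≤ (ENNReal.ofReal ε * ∫⁻ z, ‖z - c‖ₑ ^ 2 ∂μ) ^ ((1 : ℝ) / 2) := by
  set a := ENNReal.ofReal (1 - ε)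
  set b := ENNReal.ofReal ε
  have hγ := (isCoupling_map_diag μ).smul_add_smul (isCoupling_map_prodMk_const μ c) a b
  rw [← add_smul, ← ENNReal.ofReal_add (sub_nonneg.2 h1) h0, sub_add_cancel, ENNReal.ofReal_one,
    one_smul] at hγ
  refine (W2_le_of_isCoupling hγ).trans_eq ?_
  rw [lintegral_add_measure, lintegral_smul_measure, lintegral_smul_measure,
    lintegral_map (by fun_prop) (by fun_prop), lintegral_map (by fun_prop) (by fun_prop)]
  simp

lemma MemP2.lintegral_enorm_sub_sq_lt_top (hμ : MemP2 μ) (c : EuclideanSpace ℝ (Fin d)) :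
    ∫⁻ z, ‖z - c‖ₑ ^ 2 ∂μ < ∞ := by
  have := hμ.1
  have hL2 : MemLp (fun z => z - c) 2 μ :=
    ((memLp_two_iff_integrable_sq_norm aestronglyMeasurable_id).2 hμ.2).sub (memLp_const c)
  simpa [HasFiniteIntegral, enorm_pow] using
    ((memLp_two_iff_integrable_sq_norm hL2.1).1 hL2).hasFiniteIntegral

lemma tendsto_W2_diracMix (hμ : MemP2 μ) (c : EuclideanSpace ℝ (Fin d)) :
    Tendsto (fun ε => W2 μ (μ.diracMix ε c)) (𝓝[>] 0) (𝓝 0) := by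
  have := hμ.1
  have hbound : Tendsto (fun ε => (ENNReal.ofReal ε * ∫⁻ z, ‖z - c‖ₑ ^ 2 ∂μ) ^ ((1 : ℝ) / 2))
      (𝓝[>] 0) (𝓝 0) := by
    have h := ENNReal.Tendsto.mul_const (ENNReal.tendsto_ofReal (tendsto_id (x := 𝓝 (0 : ℝ))))
      (Or.inr (hμ.lintegral_enorm_sub_sq_lt_top c).ne)
    have h' := ((ENNReal.continuous_rpow_const (y := (1 : ℝ) / 2)).tendsto _).comp h
    rw [ENNReal.ofReal_zero, zero_mul, ENNReal.zero_rpow_of_pos (by norm_num)] at h'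
    exact h'.mono_left nhdsWithin_le_nhds
  refine tendsto_of_tendsto_of_tendsto_of_le_of_le' tendsto_const_nhds hbound
    (Eventually.of_forall fun _ => zero_le) ?_
  filter_upwards [Ioo_mem_nhdsGT one_pos] with ε hε using W2_diracMix_le μ hε.1.le hε.2.le c

end Wasserstein

section Lipschitz

variable {d : ℕ}
  {W : EuclideanSpace ℝ (Fin d) → Measure (EuclideanSpace ℝ (Fin d)) → EuclideanSpace ℝ (Fin d)}
  {μ ν : Measure (EuclideanSpace ℝ (Fin d))}

lemma W2Continuous.tendsto (hW : W2Continuous W) (hμ : MemP2 μ)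
    {x : EuclideanSpace ℝ (Fin d)} {ι : Type*} {l : Filter ι}
    {νs : ι → Measure (EuclideanSpace ℝ (Fin d))} {xs : ι → EuclideanSpace ℝ (Fin d)}
    (hνs : ∀ᶠ i in l, MemP2 (νs i))
    (hνμ : Tendsto (fun i => W2 μ (νs i)) l (𝓝 0)) (hxs : Tendsto xs l (𝓝 x)) :
    Tendsto (fun i => W (xs i) (νs i)) l (𝓝 (W x μ)) := by
  refine Metric.tendsto_nhds.2 fun η hη => ?_
  obtain ⟨δ, hδ, h⟩ := hW μ hμ x η hη
  filter_upwards [hνs, hνμ.eventually (gt_mem_nhds (ENNReal.ofReal_pos.2 hδ)),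
    hxs.eventually (Metric.ball_mem_nhds x hδ)] with i hi hW2 hdist
  rw [dist_eq_norm]
  exact h _ hi _ hW2 (by rwa [dist_comm])

lemma W2Continuous.continuous (hW : W2Continuous W) (hν : MemP2 ν) :
    Continuous fun z => W z ν :=
  continuous_iff_continuousAt.2 fun _ =>
    hW.tendsto hν (Eventually.of_forall fun _ => hν) (by simp [W2_self]) tendsto_id

lemma StronglyL2Monotone.norm_sub_diracMix_le {β : ℝ} (hmono : StronglyL2Monotone β W)
    (hβ : 0 < β) (hWc : ∀ ν, MemP2 ν → Continuous fun z => W z ν)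
    (hint : ∀ ν, MemP2 ν → Integrable (fun z => ‖W z ν‖ ^ 2) ν) (hμ : MemP2 μ) {ε : ℝ}
    (hε0 : 0 < ε) (hε1 : ε < 1) (x y : EuclideanSpace ℝ (Fin d)) :
    ‖W x (μ.diracMix ε x) - W y (μ.diracMix ε y)‖ ≤ 1 / β * ‖x - y‖ := by
  set μ₁ := μ.diracMix ε x
  set μ₂ := μ.diracMix ε y
  have hμε : ∀ c, MemP2 (μ.diracMix ε c) := hμ.diracMix hε0.le hε1.le
  have hL2 : ∀ c, MemLp (fun z => W z (μ.diracMix ε c)) 2 μ := fun c =>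
    (memLp_two_iff_integrable_sq_norm (hWc _ (hμε c)).aestronglyMeasurable).2
      ((hint _ (hμε c)).of_diracMix hε1)
  have hsq : Integrable (fun z => ‖W z μ₁ - W z μ₂‖ ^ 2) μ :=
    ((hL2 x).sub (hL2 y)).integrable_norm_pow two_ne_zero
  have hdiff : Continuous fun p : EuclideanSpace ℝ (Fin d) × EuclideanSpace ℝ (Fin d) =>
      W p.1 μ₁ - W p.2 μ₂ :=
    ((hWc _ (hμε x)).comp continuous_fst).sub ((hWc _ (hμε y)).comp continuous_snd)
  have key := hmono μ₁ μ₂ (hμε x) (hμε y) _ ((isCoupling_map_diag μ).diracMix ε x y)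
  rw [integral_diracMix_map_diag (g := fun p => ‖W p.1 μ₁ - W p.2 μ₂‖ ^ 2)
      (hdiff.norm.pow 2).stronglyMeasurable hsq hε0.le hε1.le,
    integral_diracMix_map_diag (hdiff.inner (by fun_prop)).stronglyMeasurable
      (by simp) hε0.le hε1.le] at key
  simp only [sub_self, inner_zero_right, integral_zero, smul_eq_mul] at key
  have hI : 0 ≤ ∫ z, ‖W z μ₁ - W z μ₂‖ ^ 2 ∂μ := integral_nonneg fun _ => by positivity
  refine norm_le_of_mul_sq_le_inner hβ (le_of_mul_le_mul_left ?_ hε0)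
  nlinarith [mul_nonneg (mul_nonneg hβ.le (sub_nonneg.2 hε1.le)) hI]

end Lipschitz

/-- **Lemma 4.7, second claim.** If `W : ℝ^d × P₂(ℝ^d) → ℝ^d` is continuous (w.r.t.
the `W₂` distance in the measure variable) and satisfies the strong `L²`-monotonicity
inequality with constant `β > 0`, then `W` is `(1/β)`-Lipschitz in the space variable,
uniformly in the measure. -/
theorem strong_L2_monotone_lipschitz_in_space (d : ℕ) (β : ℝ) (hβ : 0 < β)
    (W : EuclideanSpace ℝ (Fin d) → Measure (EuclideanSpace ℝ (Fin d)) →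
      EuclideanSpace ℝ (Fin d))
    (hcont : ∀ μ, MemP2 μ → ∀ x : EuclideanSpace ℝ (Fin d), ∀ ε > (0 : ℝ), ∃ δ > (0 : ℝ),
      ∀ ν, MemP2 ν → ∀ x' : EuclideanSpace ℝ (Fin d),
        W2 μ ν < ENNReal.ofReal δ → dist x x' < δ → ‖W x' ν - W x μ‖ < ε)
    (hint : ∀ μ, MemP2 μ → Integrable (fun x => ‖W x μ‖ ^ 2) μ)
    (hmono : ∀ μ ν, MemP2 μ → MemP2 ν →
      ∀ γ : Measure (EuclideanSpace ℝ (Fin d) × EuclideanSpace ℝ (Fin d)),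
        IsCoupling γ μ ν →
        β * ∫ p, ‖W p.1 μ - W p.2 ν‖ ^ 2 ∂γ ≤
          ∫ p, ⟪W p.1 μ - W p.2 ν, p.1 - p.2⟫ ∂γ) :
    ∀ μ, MemP2 μ → ∀ x y : EuclideanSpace ℝ (Fin d),
      ‖W x μ - W y μ‖ ≤ (1 / β) * ‖x - y‖ := by
  intro μ hμ x y
  have hlim : ∀ z, Tendsto (fun ε => W z (μ.diracMix ε z)) (𝓝[>] 0) (𝓝 (W z μ)) := fun z =>
    W2Continuous.tendsto hcont hμ
      (by filter_upwards [Ioo_mem_nhdsGT one_pos] with ε hε using hμ.diracMix hε.1.le hε.2.le z)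
      (tendsto_W2_diracMix hμ z) tendsto_const_nhds
  refine le_of_tendsto ((hlim x).sub (hlim y)).norm ?_
  filter_upwards [Ioo_mem_nhdsGT one_pos] with ε hε
  exact StronglyL2Monotone.norm_sub_diracMix_le hmono hβ
    (fun ν hν => W2Continuous.continuous hcont hν) hint hμ hε.1 hε.2 x y
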